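/- Let G be a minimally nonperfectly divisible graph. Then G has no nonempty simplicial set; in particular, for every vertex v of G, N(v) is not a clique. -/

import Mathlib

open SimpleGraph

variable {V : Type}

/-- The clique number of the subgraph of `G` induced on `S`. -/
noncomputable def omegaOn (G : SimpleGraph V) (S : Set V) : ℕ :=
  sSup {n | ∃ s : Finset V, ↑s ⊆ S ∧ G.IsNClique n s}

/-- The subgraph of `G` induced on `S` is a perfect graph. -/
def IsPerfectOn (G : SimpleGraph V) (S : Set V) : Prop :=
  ∀ T : Set V, T ⊆ S → (G.induce T).chromaticNumber = (omegaOn G T : ℕ∞)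

/-- Every nonempty induced subgraph of `G[S]` admits a perfect division. -/
def PerfDivOn (G : SimpleGraph V) (S : Set V) : Prop :=
  ∀ H : Set V, H ⊆ S → H.Nonempty →
    ∃ A B : Set V, A ∪ B = H ∧ Disjoint A B ∧
      IsPerfectOn G A ∧ omegaOn G B < omegaOn G H

/-- `G` is minimally nonperfectly divisible. -/
def MNPD (G : SimpleGraph V) : Prop :=
  ¬ PerfDivOn G Set.univ ∧ ∀ S : Set V, S ≠ Set.univ → PerfDivOn G S

/-- The external neighbourhood `N(X)`. -/
def extNbhd (G : SimpleGraph V) (X : Set V) : Set V :=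
  {v | v ∉ X ∧ ∃ x ∈ X, G.Adj v x}

/-!
Adding a vertex `v` whose neighbourhood is a clique to a perfect induced subgraph keeps it
perfect: in an `ω`-colouring of the rest, the at most `ω - 1` neighbours of `v` leave a colour
free for `v`. So in an MNPD graph `G` with such a vertex, a perfect division `(A, B)` of `G - v`,
which exists by minimality, gives the perfect division `(A + v, B)` of `G` itself.
-/

section CliqueNumber

theorem omegaOn_eq_cliqueNum_induce (G : SimpleGraph V) (S : Set V) :
    omegaOn G S = (G.induce S).cliqueNum := by
  classical
  unfold omegaOn cliqueNum
  congr 1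
  ext n
  constructor
  · rintro ⟨s, hsS, hs⟩
    refine ⟨s.subtype (· ∈ S), (isNClique_induce_iff S _ n).mpr ?_⟩
    rwa [Finset.subtype_map_of_mem fun x hx => hsS hx]
  · rintro ⟨t, ht⟩
    exact ⟨t.map (.subtype _), by simp, (isNClique_induce_iff S t n).mp ht⟩

theorem omegaOn_le_chromaticNumber (G : SimpleGraph V) (S : Set V) :
    (omegaOn G S : ℕ∞) ≤ (G.induce S).chromaticNumber :=
  omegaOn_eq_cliqueNum_induce G S ▸ cliqueNum_le_chromaticNumber

theorem omegaOn_empty (G : SimpleGraph V) : omegaOn G ∅ = 0 := by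
  refine Nat.eq_zero_of_le_zero (csSup_le ⟨0, ∅, by simp, by simp⟩ ?_)
  rintro n ⟨s, hs, hsn⟩
  rw [Set.subset_empty_iff, Finset.coe_eq_empty] at hs
  simpa [hs] using hsn.card_eq.symm.le

variable [Finite V]

theorem bddAbove_omegaOn_set (G : SimpleGraph V) (S : Set V) :
    BddAbove {n | ∃ s : Finset V, ↑s ⊆ S ∧ G.IsNClique n s} := by
  have := Fintype.ofFinite V
  exact ⟨Fintype.card V, fun n ⟨s, _, hs⟩ => hs.card_eq ▸ s.card_le_univ⟩

theorem omegaOn_mono {G : SimpleGraph V} {S T : Set V} (h : S ⊆ T) : omegaOn G S ≤ omegaOn G T :=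
  csSup_le_csSup (bddAbove_omegaOn_set G T) ⟨0, ∅, by simp, by simp⟩
    fun _ ⟨s, hsS, hs⟩ => ⟨s, hsS.trans h, hs⟩

theorem SimpleGraph.IsClique.ncard_le_omegaOn {G : SimpleGraph V} {s S : Set V} (hsS : s ⊆ S)
    (hs : G.IsClique s) : s.ncard ≤ omegaOn G S :=
  have hfin := s.toFinite
  le_csSup (bddAbove_omegaOn_set G S)
    ⟨hfin.toFinset, by simpa, by simpa, (Set.ncard_eq_toFinset_card s hfin).symm⟩

end CliqueNumber

theorem colorable_induce_insert [Finite V] {G : SimpleGraph V} {T : Set V} {v : V} {m : ℕ}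
    (hT : (G.induce T).Colorable m) (hv : (G.neighborSet v ∩ T).ncard < m) :
    (G.induce (insert v T)).Colorable m := by
  classical
  obtain ⟨C⟩ := hT
  set used : Set (Fin m) := (fun x : T => C x) '' {x | G.Adj v x}
  have hused : used.ncard < m := calc
    used.ncard ≤ {x : T | G.Adj v x}.ncard := Set.ncard_image_le (Set.toFinite _)
    _ = (G.neighborSet v ∩ T).ncard := by
      rw [← Set.ncard_image_of_injective _ Subtype.val_injective]
      congr 1
      ext x
      simp [and_comm]
    _ < m := hv
  obtain ⟨a, ha⟩ : ∃ a, a ∉ used := by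
    by_contra! h
    simp [Set.eq_univ_of_forall h] at hused
  have hfree : ∀ x : T, G.Adj v x → C x ≠ a := fun x hx hxa => ha ⟨x, hx, hxa⟩
  refine ⟨Coloring.mk (fun x => if hx : x.1 = v then a else C ⟨x, x.2.resolve_left hx⟩) ?_⟩
  rintro ⟨x, hx⟩ ⟨y, hy⟩ (hxy : G.Adj x y)
  by_cases hxv : x = v <;> by_cases hyv : y = v <;> simp only [hxv, hyv, dite_true, dite_false]
  · exact (hxy.ne (hxv.trans hyv.symm)).elim
  · exact (hfree _ (hxv ▸ hxy)).symm
  · exact hfree _ (hyv ▸ hxy.symm)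
  · exact C.valid hxy

theorem isPerfectOn_empty (G : SimpleGraph V) : IsPerfectOn G ∅ := by
  intro T hT
  obtain rfl := Set.subset_empty_iff.mp hT
  rw [chromaticNumber_eq_zero_of_isEmpty, omegaOn_empty, Nat.cast_zero]

theorem IsPerfectOn.insert [Finite V] {G : SimpleGraph V} {A : Set V} {v : V}
    (hA : IsPerfectOn G A) (hv : G.IsClique (G.neighborSet v)) :
    IsPerfectOn G (insert v A) := by
  intro T hTA
  by_cases hvT : v ∈ T
  swap
  · exact hA T ((Set.subset_insert_iff_of_notMem hvT).mp hTA)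
  set T' := T \ {v}
  have hT'A : T' ⊆ A := Set.sdiff_singleton_subset_iff.mpr hTA
  have hT' : (G.induce T').Colorable (omegaOn G T) := by
    rw [← chromaticNumber_le_iff_colorable, hA T' hT'A, Nat.cast_le]
    exact omegaOn_mono Set.sdiff_subset
  -- `v` together with its neighbours in `T'` is a clique of `T`.
  have hnbr : (G.neighborSet v ∩ T').ncard < omegaOn G T := by
    have hv' : v ∉ G.neighborSet v ∩ T' := fun h => h.2.2 rfl
    rw [Nat.lt_iff_add_one_le, ← Set.ncard_insert_of_notMem hv']
    refine IsClique.ncard_le_omegaOn (Set.insert_subset hvT fun x hx => hx.2.1) ?_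
    exact (hv.subset Set.inter_subset_left).insert fun x hx _ => hx.1
  have hT : (G.induce T).Colorable (omegaOn G T) := by
    have := colorable_induce_insert hT' hnbr
    rwa [Set.insert_sdiff_singleton, Set.insert_eq_of_mem hvT] at this
  exact le_antisymm hT.chromaticNumber_le (omegaOn_le_chromaticNumber G T)

theorem perfDivOn_univ_of_isClique_neighborSet [Finite V] {G : SimpleGraph V} {v : V}
    (hmin : ∀ S : Set V, S ≠ Set.univ → PerfDivOn G S) (hv : G.IsClique (G.neighborSet v)) :
    PerfDivOn G Set.univ := by
  intro H _ hH
  by_cases hHuniv : H = Set.univ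
  swap
  · exact hmin H hHuniv H subset_rfl hH
  subst hHuniv
  obtain ⟨A, B, hAB, hdisj, hA, hB⟩ : ∃ A B : Set V, A ∪ B = {v}ᶜ ∧ Disjoint A B ∧
      IsPerfectOn G A ∧ omegaOn G B < omegaOn G Set.univ := by
    rcases Set.eq_empty_or_nonempty ({v}ᶜ : Set V) with hempty | hne
    · refine ⟨∅, ∅, by simp [hempty], disjoint_bot_left, isPerfectOn_empty G, ?_⟩
      calc omegaOn G ∅ = 0 := omegaOn_empty G
        _ < ({v} : Set V).ncard := by simp
        _ ≤ omegaOn G Set.univ := (isClique_singleton v).ncard_le_omegaOn (Set.subset_univ _)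
    · obtain ⟨A, B, hAB, hdisj, hA, hB⟩ :=
        hmin _ (Set.compl_ne_univ.mpr (Set.singleton_nonempty v)) _ subset_rfl hne
      exact ⟨A, B, hAB, hdisj, hA, hB.trans_le (omegaOn_mono (Set.subset_univ _))⟩
  have hvB : v ∉ B := fun h => by simpa using hAB.subset (Set.mem_union_right A h)
  refine ⟨insert v A, B, ?_, Set.disjoint_insert_left.mpr ⟨hvB, hdisj⟩, hA.insert hv, hB⟩
  rw [Set.insert_union, hAB, ← Set.union_singleton, Set.compl_union_self]

theorem MNPD.not_isClique_neighborSet [Finite V] {G : SimpleGraph V} (hG : MNPD G) (v : V) :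
    ¬ G.IsClique (G.neighborSet v) :=
  fun hv => hG.1 (perfDivOn_univ_of_isClique_neighborSet hG.2 hv)

theorem stmt_5 [Fintype V] (G : SimpleGraph V) (hG : MNPD G) :
    (∀ X : Set V, X.Nonempty → ¬ (∀ x ∈ X, G.IsClique (G.neighborSet x))) ∧
    (∀ v : V, ¬ G.IsClique (G.neighborSet v)) :=
  ⟨fun _ ⟨x, hx⟩ hX => hG.not_isClique_neighborSet x (hX x hx), hG.not_isClique_neighborSet⟩
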